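/- If an actuator j is never used in the node N = ℓ:[B] — i.e. there exists a valid estimate (Σ̂, κ, Θ, α) ⊨ N with α_ℓ(j) = ∅ — then at run time the actuator j never fires any action: for every N' with N →* N' there is no transition N' → N'' obtained by applying the rule (A-com) on actuator j with any action γ. -/
import Mathlib


namespace IoTLySa

/-! ### Basic syntactic categories -/

abbrev Label := ℕ
abbrev Var := ℕ
abbrev SensorId := ℕ
abbrev ActuatorId := ℕ
abbrev Act := ℕ
abbrev Key := ℕ
abbrev FName := ℕ

/-- Abstract values of the CFA: the cut value `⊤^ℓ` (tagged secret/public),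
sensor values `i^ℓ`, node values `v^ℓ`, abstract encryptions and abstract
function applications. -/
inductive AVal : Type
  | top    : Bool → Label → AVal
  | sensor : SensorId → Label → AVal
  | val    : ℕ → Label → AVal
  | enc    : List AVal → Key → Label → AVal
  | fn     : FName → List AVal → Label → AVal

def AVal.label : AVal → Label
  | .top _ l => l
  | .sensor _ l => l
  | .val _ l => l
  | .enc _ _ l => l
  | .fn _ _ l => l

/-- The cut operator `⌊·⌋_d`, replacing subterms at depth `d` by the special
value `⊤` (classified secret or public via `cls`). -/
def AVal.cut (cls : AVal → Bool) : ℕ → AVal → AVal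
  | 0, v => .top (cls v) v.label
  | n+1, .enc vs k l => .enc (vs.map (AVal.cut cls n)) k l
  | n+1, .fn f vs l => .fn f (vs.map (AVal.cut cls n)) l
  | _+1, v => v

/-- Concrete values (free/symbolic interpretation of functions). -/
inductive CVal : Type
  | base : ℕ → CVal
  | enc  : List CVal → Key → CVal
  | fn   : FName → List CVal → CVal

/-- Instrumented values: pairs `(v, v̂)` of a concrete and an abstract value. -/
abbrev IVal := CVal × AVal

abbrev Addr := Var ⊕ SensorId

/-- Instrumented stores `Σ_ℓ^i` (with a `⊥` value, i.e. `none`). -/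
abbrev Store := Addr → Option IVal

def updStore (σ : Store) (a : Addr) (w : IVal) : Store :=
  fun b => if b = a then some w else σ b

def updVars : Store → List Var → List IVal → Store
  | σ, x :: xs, w :: ws => updVars (updStore σ (Sum.inl x) w) xs ws
  | σ, _, _ => σ

/-! ### Terms -/

inductive Expr : Type
  | val  : ℕ → Expr
  | sens : SensorId → Expr
  | var  : Var → Expr
  | enc  : List Expr → Key → Expr
  | fn   : FName → List Expr → Expr

mutual
  /-- Instrumented denotational semantics of terms. -/
  def evalE (cls : AVal → Bool) (d : ℕ) (ℓ : Label) (σ : Store) : Expr → Option IVal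
    | .val v => some (.base v, .val v ℓ)
    | .sens i => σ (Sum.inr i)
    | .var x => σ (Sum.inl x)
    | .enc es k =>
        match evalList cls d ℓ σ es with
        | some ws => some (.enc (ws.map Prod.fst) k,
                           AVal.cut cls d (.enc (ws.map Prod.snd) k ℓ))
        | none => none
    | .fn f es =>
        match evalList cls d ℓ σ es with
        | some ws => some (.fn f (ws.map Prod.fst),
                           AVal.cut cls d (.fn f (ws.map Prod.snd) ℓ))
        | none => none

  def evalList (cls : AVal → Bool) (d : ℕ) (ℓ : Label) (σ : Store) :
      List Expr → Option (List IVal)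
    | [] => some []
    | e :: es =>
        match evalE cls d ℓ σ e, evalList cls d ℓ σ es with
        | some w, some ws => some (w :: ws)
        | _, _ => none
end

/-! ### Processes, sensors, actuators -/

inductive Proc : Type
  | nil    : Proc
  | outp   : List Expr → Finset Label → Proc → Proc  -- ⟨⟨E₁,…,E_k⟩⟩ : L. P
  | outv   : List IVal → Finset Label → Proc         -- evaluated output offer
  | inp    : List Expr → List Var → Proc → Proc      -- (E₁,…,E_j; x_{j+1},…,x_k). P
  | dec    : Expr → List Expr → List Var → Key → Proc → Proc
  | cond   : Expr → Proc → Proc → Proc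
  | hvar   : Proc
  | mu     : Proc → Proc
  | assign : Var → Expr → Proc → Proc
  | act    : ActuatorId → Act → Proc → Proc          -- ⟨j,γ⟩. P

/-- Substitution of the iteration variable `h`. -/
def Proc.substH (Q : Proc) : Proc → Proc
  | .nil => .nil
  | .outp es L P => .outp es L (Proc.substH Q P)
  | .outv ws L => .outv ws L
  | .inp es xs P => .inp es xs (Proc.substH Q P)
  | .dec E es xs k P => .dec E es xs k (Proc.substH Q P)
  | .cond E P₁ P₂ => .cond E (Proc.substH Q P₁) (Proc.substH Q P₂)
  | .hvar => Q
  | .mu P => .mu P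
  | .assign x E P => .assign x E (Proc.substH Q P)
  | .act j γ P => .act j γ (Proc.substH Q P)

inductive Sensor : Type
  | nil   : Sensor
  | tau   : Sensor → Sensor
  | store : SensorId → ℕ → Sensor → Sensor  -- i := v. S
  | hvar  : Sensor
  | mu    : Sensor → Sensor

def Sensor.substH (Q : Sensor) : Sensor → Sensor
  | .nil => .nil
  | .tau S => .tau (Sensor.substH Q S)
  | .store i v S => .store i v (Sensor.substH Q S)
  | .hvar => Q
  | .mu S => .mu S

inductive Actuator : Type
  | nil  : Actuator
  | tau  : Actuator → Actuator
  | cmd  : ActuatorId → Finset Act → Actuator → Actuator  -- (|j, Γ|). A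
  | act  : Act → Actuator → Actuator                      -- γ. A
  | hvar : Actuator
  | mu   : Actuator → Actuator

def Actuator.substH (Q : Actuator) : Actuator → Actuator
  | .nil => .nil
  | .tau A => .tau (Actuator.substH Q A)
  | .cmd j Γ A => .cmd j Γ (Actuator.substH Q A)
  | .act γ A => .act γ (Actuator.substH Q A)
  | .hvar => Q
  | .mu A => .mu A

/-! ### Node components and systems of nodes -/

inductive Comp : Type
  | store    : Store → Comp
  | proc     : Proc → Comp
  | sensor   : Sensor → Comp
  | actuator : Actuator → Comp
  | par      : Comp → Comp → Comp

inductive Sys : Type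
  | nil  : Sys
  | node : Label → Comp → Sys
  | par  : Sys → Sys → Sys

/-! ### Structural congruence -/

inductive CompCong : Comp → Comp → Prop
  | refl (B) : CompCong B B
  | symm {B₁ B₂} : CompCong B₁ B₂ → CompCong B₂ B₁
  | trans {B₁ B₂ B₃} : CompCong B₁ B₂ → CompCong B₂ B₃ → CompCong B₁ B₃
  | par_congr {B₁ B₁' B₂ B₂'} : CompCong B₁ B₁' → CompCong B₂ B₂' →
      CompCong (.par B₁ B₂) (.par B₁' B₂')
  | par_comm (B₁ B₂) : CompCong (.par B₁ B₂) (.par B₂ B₁)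
  | par_assoc (B₁ B₂ B₃) : CompCong (.par (.par B₁ B₂) B₃) (.par B₁ (.par B₂ B₃))
  | par_nil (B) : CompCong (.par B (.proc .nil)) B
  | unfoldP (P) : CompCong (.proc (.mu P)) (.proc (Proc.substH (.mu P) P))
  | unfoldS (S) : CompCong (.sensor (.mu S)) (.sensor (Sensor.substH (.mu S) S))
  | unfoldA (A) : CompCong (.actuator (.mu A)) (.actuator (Actuator.substH (.mu A) A))
  | out_empty (ws) : CompCong (.proc (.outv ws ∅)) (.proc .nil)

inductive SysCong : Sys → Sys → Prop
  | refl (N) : SysCong N N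
  | symm {N₁ N₂} : SysCong N₁ N₂ → SysCong N₂ N₁
  | trans {N₁ N₂ N₃} : SysCong N₁ N₂ → SysCong N₂ N₃ → SysCong N₁ N₃
  | par_congr {N₁ N₁' N₂ N₂'} : SysCong N₁ N₁' → SysCong N₂ N₂' →
      SysCong (.par N₁ N₂) (.par N₁' N₂')
  | par_comm (N₁ N₂) : SysCong (.par N₁ N₂) (.par N₂ N₁)
  | par_assoc (N₁ N₂ N₃) : SysCong (.par (.par N₁ N₂) N₃) (.par N₁ (.par N₂ N₃))
  | par_nil (N) : SysCong (.par N .nil) N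
  | node_congr (ℓ) {B B'} : CompCong B B' → SysCong (.node ℓ B) (.node ℓ B')

/-! ### Reduction semantics (instrumented) -/

/-- Labels of component-level reductions. -/
inductive CLbl : Type
  | tau  : CLbl
  | acom : ActuatorId → Act → CLbl   -- an application of rule (A-com)

/-- Labels of system-level reductions. -/
inductive SLbl : Type
  | tau  : SLbl
  | comm : Label → Label → List IVal → SLbl  -- message sent by ℓ₁ received by ℓ₂
  | acom : Label → ActuatorId → Act → SLbl

def CLbl.toS : CLbl → Label → SLbl
  | .tau, _ => .tau
  | .acom j γ, ℓ => .acom ℓ j γ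

inductive CompRed (cls : AVal → Bool) (d : ℕ) (ℓ : Label) : Comp → CLbl → Comp → Prop
  | sstore (σ : Store) (i v S) :   -- (S-store)
      CompRed cls d ℓ (.par (.store σ) (.sensor (.store i v S))) .tau
        (.par (.store (updStore σ (Sum.inr i) (.base v, .sensor i ℓ))) (.sensor S))
  | asgm {σ E w} (x P) :           -- (Asgm)
      evalE cls d ℓ σ E = some w →
      CompRed cls d ℓ (.par (.store σ) (.proc (.assign x E P))) .tau
        (.par (.store (updStore σ (Sum.inl x) w)) (.proc P))
  | evout {σ es ws} (L P) :        -- (Ev-out)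
      evalList cls d ℓ σ es = some ws →
      CompRed cls d ℓ (.par (.store σ) (.proc (.outp es L P))) .tau
        (.par (.store σ) (.par (.proc (.outv ws L)) (.proc P)))
  | decr {σ E cs as k₀ ws ℓ'} (Es xs P) :  -- (Decr)
      evalE cls d ℓ σ E = some (.enc cs k₀, .enc as k₀ ℓ') →
      cs.length = as.length →
      evalList cls d ℓ σ Es = some ws →
      (cs.zip as).take Es.length = ws →
      Es.length + xs.length = cs.length →
      CompRed cls d ℓ (.par (.store σ) (.proc (.dec E Es xs k₀ P))) .tau
        (.par (.store (updVars σ xs ((cs.zip as).drop Es.length))) (.proc P))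
  | cond_t {σ E w} (P₁ P₂) :       -- (Cond1)
      evalE cls d ℓ σ E = some w → w.1 = .base 1 →
      CompRed cls d ℓ (.par (.store σ) (.proc (.cond E P₁ P₂))) .tau
        (.par (.store σ) (.proc P₁))
  | cond_f {σ E w} (P₁ P₂) :       -- (Cond2)
      evalE cls d ℓ σ E = some w → w.1 = .base 0 →
      CompRed cls d ℓ (.par (.store σ) (.proc (.cond E P₁ P₂))) .tau
        (.par (.store σ) (.proc P₂))
  | acom {Γ} (j γ P A) :           -- (A-com)
      γ ∈ Γ →
      CompRed cls d ℓ (.par (.proc (.act j γ P)) (.actuator (.cmd j Γ A))) (.acom j γ)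
        (.par (.proc P) (.actuator (.act γ A)))
  | actdo (γ A) :                  -- (Act)
      CompRed cls d ℓ (.actuator (.act γ A)) .tau (.actuator A)
  | intS (S) :                     -- (Int) for sensors
      CompRed cls d ℓ (.sensor (.tau S)) .tau (.sensor S)
  | intA (A) :                     -- (Int) for actuators
      CompRed cls d ℓ (.actuator (.tau A)) .tau (.actuator A)
  | parB {B₁ lbl B₁'} (B₂) :       -- (ParB)
      CompRed cls d ℓ B₁ lbl B₁' →
      CompRed cls d ℓ (.par B₁ B₂) lbl (.par B₁' B₂)
  | congr {B₁ B₁' lbl B₂' B₂} :    -- (CongrB)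
      CompCong B₁ B₁' → CompRed cls d ℓ B₁' lbl B₂' → CompCong B₂' B₂ →
      CompRed cls d ℓ B₁ lbl B₂

inductive SysRed (cls : AVal → Bool) (d : ℕ) (Compat : Label → Label → Prop) :
    Sys → SLbl → Sys → Prop
  | node {B c B'} (ℓ) :            -- (Node)
      CompRed cls d ℓ B c B' →
      SysRed cls d Compat (.node ℓ B) (c.toS ℓ) (.node ℓ B')
  | multicom {ℓ₁ ℓ₂ : Label} {L : Finset Label} {ws : List IVal} {σ₂ Es xs Q B₁ B₂} :
      -- (Multi-com)
      ℓ₂ ∈ L → Compat ℓ₁ ℓ₂ →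
      evalList cls d ℓ₂ σ₂ Es = some (ws.take Es.length) →
      Es.length + xs.length = ws.length →
      SysRed cls d Compat
        (.par (.node ℓ₁ (.par (.proc (.outv ws L)) B₁))
              (.node ℓ₂ (.par (.store σ₂) (.par (.proc (.inp Es xs Q)) B₂))))
        (.comm ℓ₁ ℓ₂ ws)
        (.par (.node ℓ₁ (.par (.proc (.outv ws (L.erase ℓ₂))) B₁))
              (.node ℓ₂ (.par (.store (updVars σ₂ xs (ws.drop Es.length)))
                              (.par (.proc Q) B₂))))
  | parN {N₁ lbl N₁'} (N₂) :       -- (ParN)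
      SysRed cls d Compat N₁ lbl N₁' →
      SysRed cls d Compat (.par N₁ N₂) lbl (.par N₁' N₂)
  | congr {N₁ N₁' lbl N₂' N₂} :    -- (CongrN)
      SysCong N₁ N₁' → SysRed cls d Compat N₁' lbl N₂' → SysCong N₂' N₂ →
      SysRed cls d Compat N₁ lbl N₂

/-- The unlabelled reduction relation `→`. -/
def Red (cls : AVal → Bool) (d : ℕ) (Compat : Label → Label → Prop) (N N' : Sys) : Prop :=
  ∃ lbl, SysRed cls d Compat N lbl N'

/-! ### Control Flow Analysis -/

/-- A CFA estimate `(Σ̂, κ, Θ, α)`. -/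
structure Estimate : Type where
  sigma : Label → Addr → Set AVal                 -- abstract stores Σ̂_ℓ
  kappa : Label → Set (Label × List AVal)         -- messages each node may receive
  theta : Label → Set AVal                        -- abstract values each node computes
  alpha : Label → ActuatorId → Set Act            -- actuator actions each node may trigger

/-- Analysis of terms: `(Σ̂, Θ) ⊨_ℓ E : ϑ`. -/
inductive TermA (cls : AVal → Bool) (d : ℕ) (ρ : Estimate) (ℓ : Label) :
    Expr → Set AVal → Prop
  | val {v ϑ} : AVal.val v ℓ ∈ ϑ → ϑ ⊆ ρ.theta ℓ → TermA cls d ρ ℓ (.val v) ϑ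
  | sens {i ϑ} : AVal.sensor i ℓ ∈ ϑ → ϑ ⊆ ρ.theta ℓ → TermA cls d ρ ℓ (.sens i) ϑ
  | var {x ϑ} : ρ.sigma ℓ (Sum.inl x) ⊆ ϑ → ϑ ⊆ ρ.theta ℓ → TermA cls d ρ ℓ (.var x) ϑ
  | enc {es : List Expr} {k : Key} {ϑs : List (Set AVal)} {ϑ : Set AVal} :
      es.length = ϑs.length →
      (∀ p ∈ es.zip ϑs, TermA cls d ρ ℓ p.1 p.2) →
      (∀ vs : List AVal, vs.length = ϑs.length →
        (∀ q ∈ vs.zip ϑs, q.1 ∈ q.2) → AVal.cut cls d (.enc vs k ℓ) ∈ ϑ) →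
      ϑ ⊆ ρ.theta ℓ →
      TermA cls d ρ ℓ (.enc es k) ϑ
  | fn {f : FName} {es : List Expr} {ϑs : List (Set AVal)} {ϑ : Set AVal} :
      es.length = ϑs.length →
      (∀ p ∈ es.zip ϑs, TermA cls d ρ ℓ p.1 p.2) →
      (∀ vs : List AVal, vs.length = ϑs.length →
        (∀ q ∈ vs.zip ϑs, q.1 ∈ q.2) → AVal.cut cls d (.fn f vs ℓ) ∈ ϑ) →
      ϑ ⊆ ρ.theta ℓ →
      TermA cls d ρ ℓ (.fn f es) ϑ

/-- Analysis of processes: `(Σ̂, κ, Θ, α) ⊨_ℓ P`. -/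
inductive ProcA (cls : AVal → Bool) (d : ℕ) (Compat : Label → Label → Prop)
    (ρ : Estimate) (ℓ : Label) : Proc → Prop
  | nil : ProcA cls d Compat ρ ℓ .nil
  | hvar : ProcA cls d Compat ρ ℓ .hvar
  | outp {es : List Expr} {L : Finset Label} {P} {ϑs : List (Set AVal)} :
      es.length = ϑs.length →
      (∀ p ∈ es.zip ϑs, TermA cls d ρ ℓ p.1 p.2) →
      (∀ vs : List AVal, vs.length = ϑs.length → (∀ q ∈ vs.zip ϑs, q.1 ∈ q.2) →
        ∀ ℓ' ∈ L, (ℓ, vs) ∈ ρ.kappa ℓ') →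
      ProcA cls d Compat ρ ℓ P →
      ProcA cls d Compat ρ ℓ (.outp es L P)
  | outv {ws : List IVal} {L : Finset Label} :
      (∀ ℓ' ∈ L, (ℓ, ws.map Prod.snd) ∈ ρ.kappa ℓ') →
      ProcA cls d Compat ρ ℓ (.outv ws L)
  | inp {Es : List Expr} {xs : List Var} {P} {ϑs : List (Set AVal)} :
      Es.length = ϑs.length →
      (∀ p ∈ Es.zip ϑs, TermA cls d ρ ℓ p.1 p.2) →
      (∀ m ∈ ρ.kappa ℓ, Compat m.1 ℓ → m.2.length = Es.length + xs.length →
        ∀ q ∈ xs.zip (m.2.drop Es.length), q.2 ∈ ρ.sigma ℓ (Sum.inl q.1)) →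
      ProcA cls d Compat ρ ℓ P →
      ProcA cls d Compat ρ ℓ (.inp Es xs P)
  | dec {E : Expr} {Es : List Expr} {xs : List Var} {k₀ : Key} {P}
        {ϑ : Set AVal} {ϑs : List (Set AVal)} :
      TermA cls d ρ ℓ E ϑ →
      Es.length = ϑs.length →
      (∀ p ∈ Es.zip ϑs, TermA cls d ρ ℓ p.1 p.2) →
      (∀ (vs : List AVal) (ℓ'' : Label), AVal.enc vs k₀ ℓ'' ∈ ϑ →
        vs.length = Es.length + xs.length →
        ∀ q ∈ xs.zip (vs.drop Es.length), q.2 ∈ ρ.sigma ℓ (Sum.inl q.1)) →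
      ProcA cls d Compat ρ ℓ P →
      ProcA cls d Compat ρ ℓ (.dec E Es xs k₀ P)
  | cond {E P₁ P₂} {ϑ : Set AVal} :
      TermA cls d ρ ℓ E ϑ →
      ProcA cls d Compat ρ ℓ P₁ → ProcA cls d Compat ρ ℓ P₂ →
      ProcA cls d Compat ρ ℓ (.cond E P₁ P₂)
  | assign {x E P} {ϑ : Set AVal} :
      TermA cls d ρ ℓ E ϑ → ϑ ⊆ ρ.sigma ℓ (Sum.inl x) →
      ProcA cls d Compat ρ ℓ P →
      ProcA cls d Compat ρ ℓ (.assign x E P)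
  | act {j γ P} :
      γ ∈ ρ.alpha ℓ j → ProcA cls d Compat ρ ℓ P →
      ProcA cls d Compat ρ ℓ (.act j γ P)
  | mu {P} : ProcA cls d Compat ρ ℓ P → ProcA cls d Compat ρ ℓ (.mu P)

/-- Analysis of node components: `(Σ̂, κ, Θ, α) ⊨_ℓ B`. -/
inductive CompA (cls : AVal → Bool) (d : ℕ) (Compat : Label → Label → Prop)
    (ρ : Estimate) (ℓ : Label) : Comp → Prop
  | store {σ : Store} :
      (∀ i : SensorId, AVal.sensor i ℓ ∈ ρ.sigma ℓ (Sum.inr i)) →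
      CompA cls d Compat ρ ℓ (.store σ)
  | proc {P} : ProcA cls d Compat ρ ℓ P → CompA cls d Compat ρ ℓ (.proc P)
  | sensor (S) : CompA cls d Compat ρ ℓ (.sensor S)
  | actuator (A) : CompA cls d Compat ρ ℓ (.actuator A)
  | par {B₁ B₂} : CompA cls d Compat ρ ℓ B₁ → CompA cls d Compat ρ ℓ B₂ →
      CompA cls d Compat ρ ℓ (.par B₁ B₂)

/-- Analysis of systems of nodes: `(Σ̂, κ, Θ, α) ⊨ N`. -/
inductive SysA (cls : AVal → Bool) (d : ℕ) (Compat : Label → Label → Prop)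
    (ρ : Estimate) : Sys → Prop
  | nil : SysA cls d Compat ρ .nil
  | node {ℓ B} : CompA cls d Compat ρ ℓ B → SysA cls d Compat ρ (.node ℓ B)
  | par {N₁ N₂} : SysA cls d Compat ρ N₁ → SysA cls d Compat ρ N₂ →
      SysA cls d Compat ρ (.par N₁ N₂)

/-! ### Agreement between concrete and abstract stores -/

/-- `Σ_ℓ^i ⋈ Σ̂_ℓ`. -/
def Agrees (σ : Store) (sA : Addr → Set AVal) : Prop :=
  ∀ a w, σ a = some w → w.2 ∈ sA a

/-- The store `σ` occurs in the component `B`. -/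
def Comp.hasStore : Comp → Store → Prop
  | .store σ', σ => σ' = σ
  | .par B₁ B₂, σ => B₁.hasStore σ ∨ B₂.hasStore σ
  | _, _ => False

/-- The store `σ` occurs in the system `N` within a node labelled `ℓ`. -/
def Sys.hasStore : Sys → Label → Store → Prop
  | .nil, _, _ => False
  | .node ℓ' B, ℓ, σ => ℓ' = ℓ ∧ B.hasStore σ
  | .par N₁ N₂, ℓ, σ => N₁.hasStore ℓ σ ∨ N₂.hasStore ℓ σ

/-! ### Statement 4: an actuator that is never used never fires -/

/-- A process contains no `act j _ _` prefix anywhere. -/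
def Proc.noAct (j : ActuatorId) : Proc → Prop
  | .nil => True
  | .outp _ _ P => P.noAct j
  | .outv _ _ => True
  | .inp _ _ P => P.noAct j
  | .dec _ _ _ _ P => P.noAct j
  | .cond _ P₁ P₂ => P₁.noAct j ∧ P₂.noAct j
  | .hvar => True
  | .mu P => P.noAct j
  | .assign _ _ P => P.noAct j
  | .act j' _ P => j' ≠ j ∧ P.noAct j

def Comp.noAct (j : ActuatorId) : Comp → Prop
  | .proc P => P.noAct j
  | .par B₁ B₂ => B₁.noAct j ∧ B₂.noAct j
  | _ => True

def Sys.noActAt (ℓ : Label) (j : ActuatorId) : Sys → Prop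
  | .nil => True
  | .node ℓ' B => ℓ' = ℓ → B.noAct j
  | .par N₁ N₂ => N₁.noActAt ℓ j ∧ N₂.noActAt ℓ j

theorem ProcA.noAct {cls d Compat ρ ℓ j P}
    (h : ProcA cls d Compat ρ ℓ P) (hnu : ρ.alpha ℓ j = ∅) : Proc.noAct j P := by
  induction h <;> simp_all [Proc.noAct]
  case act jj γ P hγ _ ih =>
    intro hj; subst hj; rw [hnu] at hγ; exact hγ

theorem noAct_substH {j : ActuatorId} {Q : Proc} (hQ : Proc.noAct j Q) :
    ∀ P : Proc, Proc.noAct j P → Proc.noAct j (Proc.substH Q P) := by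
  intro P
  induction P <;> simp_all [Proc.substH, Proc.noAct]

theorem noAct_of_substH {j : ActuatorId} {Q : Proc} :
    ∀ P : Proc, Proc.noAct j (Proc.substH Q P) → Proc.noAct j P := by
  intro P
  induction P <;> simp_all [Proc.substH, Proc.noAct]

theorem CompCong.noAct_iff {j : ActuatorId} {B B' : Comp}
    (h : CompCong B B') : Comp.noAct j B ↔ Comp.noAct j B' := by
  induction h with
  | refl => rfl
  | symm _ ih => exact ih.symm
  | trans _ _ ih₁ ih₂ => exact ih₁.trans ih₂
  | par_congr _ _ ih₁ ih₂ => simp [Comp.noAct, ih₁, ih₂]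
  | par_comm => simp [Comp.noAct, and_comm]
  | par_assoc => simp [Comp.noAct, and_assoc]
  | par_nil => simp [Comp.noAct, Proc.noAct]
  | unfoldP P =>
      simp only [Comp.noAct]
      constructor
      · intro h; exact noAct_substH (Q := .mu P) h P h
      · intro h; exact noAct_of_substH P h
  | unfoldS => simp [Comp.noAct]
  | unfoldA => simp [Comp.noAct]
  | out_empty => simp [Comp.noAct, Proc.noAct]

theorem CompRed.noAct {cls d ℓ j} {B : Comp} {c : CLbl} {B' : Comp}
    (h : CompRed cls d ℓ B c B') (hB : Comp.noAct j B) :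
    Comp.noAct j B' ∧ ∀ γ, c ≠ .acom j γ := by
  induction h with
  | sstore => simp_all [Comp.noAct]
  | asgm => simp_all [Comp.noAct, Proc.noAct]
  | evout => simp_all [Comp.noAct, Proc.noAct]
  | decr => simp_all [Comp.noAct, Proc.noAct]
  | cond_t => exact ⟨⟨hB.1, hB.2.1⟩, by simp⟩
  | cond_f => exact ⟨⟨hB.1, hB.2.2⟩, by simp⟩
  | acom jj γ P A hγ =>
      refine ⟨⟨hB.1.2, trivial⟩, fun γ' hcon => ?_⟩
      cases hcon
      exact hB.1.1 rfl
  | actdo => simp_all [Comp.noAct]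
  | intS => simp_all [Comp.noAct]
  | intA => simp_all [Comp.noAct]
  | parB B₂ _ ih =>
      obtain ⟨h1, h2⟩ := ih hB.1
      exact ⟨⟨h1, hB.2⟩, h2⟩
  | congr hc₁ _ hc₂ ih =>
      obtain ⟨h1, h2⟩ := ih (hc₁.noAct_iff.mp hB)
      exact ⟨hc₂.noAct_iff.mp h1, h2⟩

theorem SysCong.noAct_iff {ℓ j} {N N' : Sys} (h : SysCong N N') :
    Sys.noActAt ℓ j N ↔ Sys.noActAt ℓ j N' := by
  induction h with
  | refl => rfl
  | symm _ ih => exact ih.symm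
  | trans _ _ ih₁ ih₂ => exact ih₁.trans ih₂
  | par_congr _ _ ih₁ ih₂ => simp [Sys.noActAt, ih₁, ih₂]
  | par_comm => simp [Sys.noActAt, and_comm]
  | par_assoc => simp [Sys.noActAt, and_assoc]
  | par_nil => simp [Sys.noActAt]
  | node_congr ℓ' hc => simp only [Sys.noActAt]; exact imp_congr Iff.rfl hc.noAct_iff

theorem SysRed.noAct {cls d Compat ℓ j} {N : Sys} {lbl : SLbl} {N' : Sys}
    (h : SysRed cls d Compat N lbl N') (hN : Sys.noActAt ℓ j N) :
    Sys.noActAt ℓ j N' ∧ ∀ γ, lbl ≠ .acom ℓ j γ := by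
  induction h with
  | node ℓ' hcr =>
      rename_i B c B'
      by_cases hℓ : ℓ' = ℓ
      · subst hℓ
        obtain ⟨h1, h2⟩ := hcr.noAct (j := j) (hN rfl)
        refine ⟨fun _ => h1, fun γ hcon => ?_⟩
        cases c with
        | tau => simp [CLbl.toS] at hcon
        | acom jj γγ =>
            simp only [CLbl.toS] at hcon
            cases hcon
            exact h2 γ rfl
      · refine ⟨fun hh => absurd hh hℓ, fun γ hcon => ?_⟩
        cases c with
        | tau => simp [CLbl.toS] at hcon
        | acom jj γγ =>
            simp only [CLbl.toS] at hcon
            cases hcon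
            exact hℓ rfl
  | multicom _ _ _ _ =>
      refine ⟨⟨fun hh => ?_, fun hh => ?_⟩, fun γ hcon => by cases hcon⟩
      · have := hN.1 hh
        exact ⟨this.1, this.2⟩
      · have := hN.2 hh
        exact ⟨this.1, ⟨this.2.1, this.2.2⟩⟩
  | parN N₂ _ ih =>
      obtain ⟨h1, h2⟩ := ih hN.1
      exact ⟨⟨h1, hN.2⟩, h2⟩
  | congr hc₁ _ hc₂ ih =>
      obtain ⟨h1, h2⟩ := ih (hc₁.noAct_iff.mp hN)
      exact ⟨hc₂.noAct_iff.mp h1, h2⟩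

theorem CompA.noAct {cls d Compat ρ ℓ j B}
    (h : CompA cls d Compat ρ ℓ B) (hnu : ρ.alpha ℓ j = ∅) : Comp.noAct j B := by
  induction h with
  | store _ => trivial
  | proc hp => exact hp.noAct hnu
  | sensor => trivial
  | actuator => trivial
  | par _ _ ih₁ ih₂ => exact ⟨ih₁, ih₂⟩

/-- If the actuator `j` is **never used** in the node `N = ℓ:[B]` — i.e. there
is a valid estimate `(Σ̂, κ, Θ, α) ⊨ N` with `α_ℓ(j) = ∅` — then at run time
the actuator `j` never fires any action: for every `N'` with `N →* N'` there
is no transition `N' → N''` obtained by applying the rule (A-com) on actuator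
`j`, with any action `γ`. -/
theorem never_used_never_fires (cls : AVal → Bool) (d : ℕ)
    (Compat : Label → Label → Prop) (ρ : Estimate)
    (ℓ : Label) (B : Comp) (j : ActuatorId)
    (hvalid : SysA cls d Compat ρ (.node ℓ B))
    (hnu : ρ.alpha ℓ j = ∅) :
    ∀ N' : Sys, Relation.ReflTransGen (Red cls d Compat) (.node ℓ B) N' →
      ∀ (γ : Act) (N'' : Sys), ¬ SysRed cls d Compat N' (.acom ℓ j γ) N'' := by
  intro N' hsteps
  have hinv : Sys.noActAt ℓ j N' := by
    induction hsteps with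
    | refl =>
        cases hvalid with
        | node hB => exact fun _ => hB.noAct hnu
    | tail _ step ih =>
        obtain ⟨lbl, hs⟩ := step
        exact (hs.noAct ih).1
  intro γ N'' hred
  exact (hred.noAct hinv).2 γ rfl
end IoTLySa
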